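/- Let v ∈ ℝ², r > 0, and let A, B be points with 0 < dist(v,A), dist(v,B) ≤ 2r. Define for each point P its angular interval I_P = [α_P − arccos(d_P/(2r)), α_P + arccos(d_P/(2r))] where d_P = dist(v,P) and α_P is its polar angle about v. Then there exists a disk of radius r whose boundary passes through v containing both A and B if and only if I_A ∩ I_B ≠ ∅ (intervals interpreted on the circle ℝ/2πℤ). -/

import Mathlib

/-!
Write `P = v + d • dir α` and a candidate centre `C = v + r • dir θ`. By the law of cosines
`|P - C|² = d² + r² - 2 d r cos (θ - α)`, so `P` lies in the disk about `C` iff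
`d / (2r) ≤ cos (θ - α)`, i.e. iff `θ` is within `arccos (d / (2r))` of `α` modulo `2π`.
Every centre at distance `r` from `v` has this form (polar form of `C - v`), so a disk through `v`
containing `A` and `B` is the same thing as a common angle `θ` of the two intervals.
-/

abbrev Pt := EuclideanSpace ℝ (Fin 2)

/-- Unit vector in direction `θ`. -/
noncomputable def dir (θ : ℝ) : Pt := (WithLp.equiv 2 (Fin 2 → ℝ)).symm ![Real.cos θ, Real.sin θ]

/-- The angular interval of a point at distance `d_P ∈ (0, 2r]` and polar angle `α_P` from `v`,
interpreted on the circle `ℝ/2πℤ`. -/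
def angInterval (r d_P α_P : ℝ) : Set ℝ :=
  {θ : ℝ | ∃ k : ℤ, |θ - (α_P + 2 * Real.pi * k)| ≤ Real.arccos (d_P / (2 * r))}

open Real
open Complex (orthonormalBasisOneI I)

lemma dir_eq_repr_exp (θ : ℝ) : dir θ = orthonormalBasisOneI.repr (Complex.exp (θ * I)) := by
  ext i
  fin_cases i <;> simp [dir, Complex.exp_ofReal_mul_I_re, Complex.exp_ofReal_mul_I_im]

lemma norm_dir (θ : ℝ) : ‖dir θ‖ = 1 := by
  rw [dir_eq_repr_exp, LinearIsometryEquiv.norm_map, Complex.norm_exp_ofReal_mul_I]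

lemma inner_dir (α θ : ℝ) : inner ℝ (dir α) (dir θ) = cos (θ - α) := by
  simp only [dir, PiLp.inner_apply, Fin.sum_univ_two, WithLp.equiv_symm_apply,
    Matrix.cons_val_zero, Matrix.cons_val_one, RCLike.inner_apply, conj_trivial, Real.cos_sub]

lemma exists_eq_norm_smul_dir (x : Pt) : ∃ θ : ℝ, x = ‖x‖ • dir θ := by
  set z := orthonormalBasisOneI.repr.symm x
  refine ⟨Complex.arg z, ?_⟩
  rw [dir_eq_repr_exp, ← LinearIsometryEquiv.map_smul, ← orthonormalBasisOneI.repr.symm.norm_map x,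
    Complex.real_smul, Complex.norm_mul_exp_arg_mul_I, LinearIsometryEquiv.apply_symm_apply]

lemma dist_smul_dir_sq (a b α θ : ℝ) :
    dist (a • dir α) (b • dir θ) ^ 2 = a ^ 2 + b ^ 2 - 2 * a * b * cos (θ - α) := by
  rw [dist_eq_norm, norm_sub_sq_real, real_inner_smul_left, real_inner_smul_right, inner_dir,
    norm_smul, norm_smul, norm_dir, norm_dir, Real.norm_eq_abs, Real.norm_eq_abs]
  simp only [mul_one, sq_abs]
  ring

lemma le_cos_iff_exists_abs_sub_le_arccos {c x : ℝ} (hc₀ : -1 ≤ c) (hc₁ : c ≤ 1) :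
    c ≤ cos x ↔ ∃ k : ℤ, |x - 2 * π * k| ≤ arccos c := by
  have hcos (k : ℤ) : cos |x - 2 * π * k| = cos x := by
    rw [cos_abs, mul_comm, ← cos_sub_int_mul_two_pi x k]
  constructor
  · intro h
    obtain ⟨hlo, hhi⟩ := toIocMod_mem_Ioc two_pi_pos (-π) x
    refine ⟨toIocDiv two_pi_pos (-π) x, ?_⟩
    have hy : x - 2 * π * toIocDiv two_pi_pos (-π) x = toIocMod two_pi_pos (-π) x := by
      rw [← self_sub_toIocDiv_zsmul, zsmul_eq_mul, mul_comm]
    have hπ : |x - 2 * π * toIocDiv two_pi_pos (-π) x| ≤ π := by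
      rw [hy, abs_le]; constructor <;> linarith
    rw [← arccos_cos (abs_nonneg _) hπ, hcos]
    exact arccos_le_arccos h
  · rintro ⟨k, hk⟩
    calc c = cos (arccos c) := (cos_arccos hc₀ hc₁).symm
      _ ≤ cos |x - 2 * π * k| := cos_le_cos_of_nonneg_of_le_pi (abs_nonneg _) (arccos_le_pi c) hk
      _ = cos x := hcos k

lemma mem_angInterval_iff_le_cos {r d α θ : ℝ} (hr : 0 < r) (hd₀ : 0 ≤ d) (hd : d ≤ 2 * r) :
    θ ∈ angInterval r d α ↔ d / (2 * r) ≤ cos (θ - α) := by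
  have hc₀ : -1 ≤ d / (2 * r) := by linarith [div_nonneg hd₀ (by positivity : (0:ℝ) ≤ 2 * r)]
  have hc₁ : d / (2 * r) ≤ 1 := (div_le_one (by positivity)).2 hd
  simp only [angInterval, Set.mem_ofPred_eq, le_cos_iff_exists_abs_sub_le_arccos hc₀ hc₁,
    sub_add_eq_sub_sub]

lemma dist_add_smul_dir_le_iff (v : Pt) {d r α θ : ℝ} (hd : 0 < d) (hr : 0 < r) :
    dist (v + d • dir α) (v + r • dir θ) ≤ r ↔ d / (2 * r) ≤ cos (θ - α) := by
  rw [dist_add_left, ← sq_le_sq₀ dist_nonneg hr.le, dist_smul_dir_sq, div_le_iff₀ (by positivity)]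
  constructor <;> intro h <;> nlinarith

lemma dist_add_smul_dir_le_iff_mem_angInterval {v P : Pt} {r α θ : ℝ} (hr : 0 < r)
    (hP₀ : 0 < dist v P) (hP : dist v P ≤ 2 * r) (hα : P = v + dist v P • dir α) :
    dist P (v + r • dir θ) ≤ r ↔ θ ∈ angInterval r (dist v P) α := by
  rw [mem_angInterval_iff_le_cos hr hP₀.le hP, ← dist_add_smul_dir_le_iff v hP₀ hr, ← hα]

lemma dist_self_add_smul_dir (v : Pt) (r θ : ℝ) : dist v (v + r • dir θ) = |r| := by
  rw [dist_self_add_right, norm_smul, norm_dir, mul_one, Real.norm_eq_abs]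

lemma exists_eq_add_smul_dir {v c : Pt} {r : ℝ} (h : dist v c = r) :
    ∃ θ : ℝ, c = v + r • dir θ := by
  obtain ⟨θ, hθ⟩ := exists_eq_norm_smul_dir (c - v)
  refine ⟨θ, ?_⟩
  rw [← h, dist_eq_norm_vsub', vsub_eq_sub, ← hθ, add_sub_cancel]

/-- There is a closed disk of radius `r` whose boundary passes through `v` containing both `A`
and `B` iff the angular intervals of `A` and `B` intersect. -/
theorem stmt18 (v A B : Pt) (r α_A α_B : ℝ) (hr : 0 < r)
    (hApos : 0 < dist v A) (hAle : dist v A ≤ 2 * r)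
    (hBpos : 0 < dist v B) (hBle : dist v B ≤ 2 * r)
    (hαA : A = v + dist v A • dir α_A)
    (hαB : B = v + dist v B • dir α_B) :
    (∃ c : Pt, dist v c = r ∧ dist A c ≤ r ∧ dist B c ≤ r) ↔
      (angInterval r (dist v A) α_A ∩ angInterval r (dist v B) α_B).Nonempty := by
  have hA θ := dist_add_smul_dir_le_iff_mem_angInterval (θ := θ) hr hApos hAle hαA
  have hB θ := dist_add_smul_dir_le_iff_mem_angInterval (θ := θ) hr hBpos hBle hαB
  constructor
  · rintro ⟨c, hvc, hAc, hBc⟩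
    obtain ⟨θ, rfl⟩ := exists_eq_add_smul_dir hvc
    exact ⟨θ, (hA θ).1 hAc, (hB θ).1 hBc⟩
  · rintro ⟨θ, hθA, hθB⟩
    exact ⟨v + r • dir θ, by rw [dist_self_add_smul_dir, abs_of_pos hr], (hA θ).2 hθA, (hB θ).2 hθB⟩
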